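/- Let n ≥ 1, τ ∈ S_n and a ∈ (ℤ/2)^n. If the conjugacy class of τ in S_n (with the conjugation operation ▷) is of type D, then the conjugacy class of (a,τ) in W_n is of type D. -/

import Mathlib

/-- The action of a permutation `σ ∈ S_n` on a vector `a ∈ (ℤ/2)^n`:
`(σ · a)_i = a_{σ⁻¹ i}`. -/
def permAct {n : ℕ} (σ : Equiv.Perm (Fin n)) (a : Fin n → ZMod 2) : Fin n → ZMod 2 :=
  fun i => a (σ⁻¹ i)

/-- The underlying set of the hyperoctahedral group `W n = (ℤ/2)^n ⋊ S_n`. -/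
@[ext]
structure W (n : ℕ) where
  vec : Fin n → ZMod 2
  perm : Equiv.Perm (Fin n)

/-- Group structure of `W n`: `(a,σ)(b,μ) = (a + σ·b, σμ)`. -/
instance (n : ℕ) : Group (W n) where
  mul x y := ⟨x.vec + permAct x.perm y.vec, x.perm * y.perm⟩
  one := ⟨0, 1⟩
  inv x := ⟨permAct x.perm⁻¹ (-x.vec), x.perm⁻¹⟩
  mul_assoc x y z := by
    refine W.ext ?_ ?_
    · show (x.vec + permAct x.perm y.vec) + permAct (x.perm * y.perm) z.vec
        = x.vec + permAct x.perm (y.vec + permAct y.perm z.vec)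
      funext i
      simp [permAct, mul_inv_rev, Equiv.Perm.mul_apply, add_assoc]
    · exact mul_assoc _ _ _
  one_mul x := by
    refine W.ext ?_ ?_
    · show (0 : Fin n → ZMod 2) + permAct 1 x.vec = x.vec
      funext i; simp [permAct]
    · exact one_mul _
  mul_one x := by
    refine W.ext ?_ ?_
    · show x.vec + permAct x.perm 0 = x.vec
      funext i; simp [permAct]
    · exact mul_one _
  inv_mul_cancel x := by
    refine W.ext ?_ ?_
    · show permAct x.perm⁻¹ (-x.vec) + permAct x.perm⁻¹ x.vec = 0
      funext i; simp only [permAct, Pi.add_apply, Pi.neg_apply, Pi.zero_apply, neg_add_cancel]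
    · exact inv_mul_cancel _

@[simp] theorem W.mul_vec {n : ℕ} (x y : W n) :
    (x * y).vec = x.vec + permAct x.perm y.vec := rfl
@[simp] theorem W.mul_perm {n : ℕ} (x y : W n) :
    (x * y).perm = x.perm * y.perm := rfl
@[simp] theorem W.one_vec {n : ℕ} : (1 : W n).vec = 0 := rfl
@[simp] theorem W.one_perm {n : ℕ} : (1 : W n).perm = 1 := rfl
@[simp] theorem W.inv_vec {n : ℕ} (x : W n) :
    (x⁻¹).vec = permAct x.perm⁻¹ (-x.vec) := rfl
@[simp] theorem W.inv_perm {n : ℕ} (x : W n) : (x⁻¹).perm = x.perm⁻¹ := rfl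

/-- Conjugation `x ▷ y = x y x⁻¹` in a group. -/
def conjAct' {G : Type*} [Group G] (x y : G) : G := x * y * x⁻¹

/-- `sq(x,y) = x ▷ (y ▷ (x ▷ y))`. -/
def sqD {G : Type*} [Group G] (x y : G) : G := conjAct' x (conjAct' y (conjAct' x y))

/-- Conjugacy class of `x` in the group `G`. -/
def conjClass {G : Type*} [Group G] (x : G) : Set G := {y | ∃ t : G, y = t * x * t⁻¹}

/-- A subset `O` of a group is of type D. -/
def IsTypeD {G : Type*} [Group G] (O : Set G) : Prop :=
  ∃ R S : Set G, R ⊆ O ∧ S ⊆ O ∧ R.Nonempty ∧ S.Nonempty ∧ Disjoint R S ∧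
    (∀ r ∈ R, ∀ r' ∈ R, conjAct' r r' ∈ R) ∧
    (∀ s ∈ S, ∀ s' ∈ S, conjAct' s s' ∈ S) ∧
    (∀ r ∈ R, ∀ s ∈ S, conjAct' r s ∈ S ∧ conjAct' s r ∈ R) ∧
    (∃ a ∈ R, ∃ b ∈ S, sqD a b ≠ b)

/-- The subgroup `K_n ⋊ S_n` of `W n`, where `K_n = {a : a_1 + ⋯ + a_n = 0}`. -/
def Ksub (n : ℕ) : Subgroup (W n) where
  carrier := {x | ∑ i, x.vec i = 0}
  one_mem' := by simp
  mul_mem' := by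
    intro x y hx hy
    simp only [Set.mem_setOf_eq] at *
    rw [W.mul_vec]
    simp only [Pi.add_apply, Finset.sum_add_distrib, hx, zero_add, permAct]
    rw [Equiv.sum_comp x.perm⁻¹ y.vec]
    exact hy
  inv_mem' := by
    intro x hx
    simp only [Set.mem_setOf_eq] at *
    rw [W.inv_vec]
    simp only [permAct, inv_inv, Pi.neg_apply]
    rw [Finset.sum_neg_distrib, Equiv.sum_comp x.perm x.vec, hx, neg_zero]

/-! Type D passes up along homomorphisms: since `f` commutes with `▷` and `sq`, the preimages
in a conjugation-closed set `O` of the two halves of a type D decomposition of `O' ⊆ f '' O`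
again form such a decomposition, and the witnesses lift because `O` maps onto `O'`. Apply this
to the projection `W_n → S_n`, which maps the class of `(a, τ)` onto the class of `τ`. -/

section TypeD

variable {G H : Type*} [Group G] [Group H]

theorem conjAct'_mem_conjClass (g : G) {x y : G} (hx : x ∈ conjClass y) :
    conjAct' g x ∈ conjClass y := by
  obtain ⟨t, rfl⟩ := hx
  exact ⟨g * t, by simp [conjAct', mul_assoc]⟩

theorem map_conjAct' (f : G →* H) (x y : G) : f (conjAct' x y) = conjAct' (f x) (f y) := by
  simp [conjAct']

theorem map_sqD (f : G →* H) (x y : G) : f (sqD x y) = sqD (f x) (f y) := by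
  simp only [sqD, map_conjAct']

theorem conjClass_subset_image {f : G →* H} (hf : Function.Surjective f) (x : G) :
    conjClass (f x) ⊆ f '' conjClass x := by
  rintro _ ⟨t, rfl⟩
  obtain ⟨u, rfl⟩ := hf t
  exact ⟨u * x * u⁻¹, ⟨u, rfl⟩, by simp⟩

theorem IsTypeD.of_subset_image (f : G →* H) {O : Set G} {O' : Set H}
    (hO : ∀ x ∈ O, ∀ y ∈ O, conjAct' x y ∈ O) (hO' : O' ⊆ f '' O) (hD : IsTypeD O') :
    IsTypeD O := by
  obtain ⟨R, S, hRO, hSO, ⟨r₀, hr₀⟩, ⟨s₀, hs₀⟩, hRS, hRR, hSS, hmix, a, ha, b, hb, hsq⟩ := hD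
  have lift : ∀ {T : Set H}, T ⊆ O' → ∀ t ∈ T, ∃ x ∈ O ∩ f ⁻¹' T, f x = t := by
    intro T hT t ht
    obtain ⟨x, hx, rfl⟩ := hO' (hT ht)
    exact ⟨x, ⟨hx, ht⟩, rfl⟩
  obtain ⟨x, hx, hfx⟩ := lift hRO a ha
  obtain ⟨y, hy, hfy⟩ := lift hSO b hb
  refine ⟨O ∩ f ⁻¹' R, O ∩ f ⁻¹' S, Set.inter_subset_left, Set.inter_subset_left,
    (lift hRO r₀ hr₀).imp fun _ h => h.1, (lift hSO s₀ hs₀).imp fun _ h => h.1,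
    (hRS.preimage f).mono Set.inter_subset_right Set.inter_subset_right, ?_, ?_, ?_,
    x, hx, y, hy, fun h => hsq ?_⟩
  · rintro r ⟨hrO, hrR⟩ r' ⟨hr'O, hr'R⟩
    exact ⟨hO r hrO r' hr'O, by simpa [map_conjAct'] using hRR _ hrR _ hr'R⟩
  · rintro s ⟨hsO, hsS⟩ s' ⟨hs'O, hs'S⟩
    exact ⟨hO s hsO s' hs'O, by simpa [map_conjAct'] using hSS _ hsS _ hs'S⟩
  · rintro r ⟨hrO, hrR⟩ s ⟨hsO, hsS⟩
    obtain ⟨hrs, hsr⟩ := hmix _ hrR _ hsS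
    exact ⟨⟨hO r hrO s hsO, by simpa [map_conjAct'] using hrs⟩,
      ⟨hO s hsO r hrO, by simpa [map_conjAct'] using hsr⟩⟩
  · simpa [map_sqD, hfx, hfy] using congrArg f h

end TypeD

def W.permHom (n : ℕ) : W n →* Equiv.Perm (Fin n) where
  toFun := W.perm
  map_one' := rfl
  map_mul' _ _ := rfl

theorem W.permHom_surjective (n : ℕ) : Function.Surjective (W.permHom n) :=
  fun σ => ⟨⟨0, σ⟩, rfl⟩

theorem typeD_lift_general (n : ℕ) (τ : Equiv.Perm (Fin n))
    (a : Fin n → ZMod 2) (hτ : IsTypeD (conjClass τ)) :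
    IsTypeD (conjClass (W.mk a τ)) := by
  exact IsTypeD.of_subset_image (W.permHom n) (fun x _ _ hy => conjAct'_mem_conjClass x hy)
    (conjClass_subset_image (W.permHom_surjective n) (W.mk a τ)) hτ

/-- if the conjugacy class of `τ` in `S_n` is of type D, then so
is the conjugacy class of `(a,τ)` in `W n`. -/
theorem typeD_lift (n : ℕ) (hn : 1 ≤ n) (τ : Equiv.Perm (Fin n))
    (a : Fin n → ZMod 2) (hτ : IsTypeD (conjClass τ)) :
    IsTypeD (conjClass (W.mk a τ)) :=
  typeD_lift_general n τ a hτ
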